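/- arXiv:2206.03723 — 3 statements merged into one kernel-verified Lean document; each statement's English description precedes it below -/
import Mathlib

section
/- There exist constants C > 0 and N such that for every n ≥ N the following holds: if G is a connected simple graph on n vertices maximizing p(G) = λ1(G) + λ1(Ḡ) among all graphs on n vertices, and x, x̄ are nonnegative unit eigenvectors of A(G) and A(Ḡ) for λ1(G) and λ1(Ḡ), then n^{-1/2} ≤ max_u x_u ≤ C·n^{-1/2} and n^{-1/2} ≤ max_u x̄_u ≤ C·n^{-1/2}. -/
/-- The adjacency matrix of a simple graph on `Fin n`, over `ℝ`. -/
noncomputable def adjMat {n : ℕ} (G : SimpleGraph (Fin n)) : Matrix (Fin n) (Fin n) ℝ :=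
  letI : DecidableRel G.Adj := Classical.decRel _
  G.adjMatrix ℝ

/-- The set of eigenvalues of a real square matrix. -/
def eigSet {n : ℕ} (M : Matrix (Fin n) (Fin n) ℝ) : Set ℝ :=
  {mu : ℝ | ∃ x : Fin n → ℝ, x ≠ 0 ∧ M.mulVec x = mu • x}

/-- The largest eigenvalue of a real square matrix. -/
noncomputable def lamMax {n : ℕ} (M : Matrix (Fin n) (Fin n) ℝ) : ℝ := sSup (eigSet M)

/-- The least eigenvalue of a real square matrix. -/
noncomputable def lamMin {n : ℕ} (M : Matrix (Fin n) (Fin n) ℝ) : ℝ := sInf (eigSet M)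

/-- `λ₁(G)`: the largest adjacency eigenvalue of `G`. -/
noncomputable def lam1 {n : ℕ} (G : SimpleGraph (Fin n)) : ℝ := lamMax (adjMat G)

/-- The degree of a vertex. -/
noncomputable def deg {n : ℕ} (G : SimpleGraph (Fin n)) (v : Fin n) : ℕ :=
  Nat.card {u : Fin n // G.Adj v u}

/-- The signless Laplacian `Q(G) = D(G) + A(G)`. -/
noncomputable def signlessLap {n : ℕ} (G : SimpleGraph (Fin n)) : Matrix (Fin n) (Fin n) ℝ :=
  Matrix.diagonal (fun v => (deg G v : ℝ)) + adjMat G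

/-- `q₁(G)`: the largest signless Laplacian eigenvalue. -/
noncomputable def q1 {n : ℕ} (G : SimpleGraph (Fin n)) : ℝ := lamMax (signlessLap G)

/-- `qₙ(G)`: the least signless Laplacian eigenvalue. -/
noncomputable def qmin {n : ℕ} (G : SimpleGraph (Fin n)) : ℝ := lamMin (signlessLap G)

/-- The `Q`-spread `s_Q(G) = q₁(G) - qₙ(G)`. -/
noncomputable def sQ {n : ℕ} (G : SimpleGraph (Fin n)) : ℝ := q1 G - qmin G

/-- The complete split graph `CS_{n,ω}`: a clique on the first `ω` vertices, completely
joined to an independent set on the remaining `n - ω` vertices. -/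
def CS (n w : ℕ) : SimpleGraph (Fin n) where
  Adj u v := u ≠ v ∧ ((u : ℕ) < w ∨ (v : ℕ) < w)
  symm := by constructor; intro u v h; exact ⟨h.1.symm, h.2.symm⟩
  loopless := by constructor; intro u h; exact h.1 rfl

/-- `K_{n-1}^+`: the complete graph on the first `n-1` vertices together with a pendant
vertex (the last vertex) joined to exactly one clique vertex (vertex `0`). -/
def KPlus (n : ℕ) : SimpleGraph (Fin n) where
  Adj u v := u ≠ v ∧ (((u : ℕ) < n - 1 ∧ (v : ℕ) < n - 1) ∨ (u : ℕ) = 0 ∨ (v : ℕ) = 0)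
  symm := by constructor; intro u v h; refine ⟨h.1.symm, ?_⟩; tauto
  loopless := by constructor; intro u h; exact h.1 rfl

/-!
The complete bipartite graph `K_{a,b}` with `a = n - ⌊n/4⌋`, `b = ⌊n/4⌋` has `λ₁ = √(ab)`, and its
complement `K_a ∪ K_b` has `λ₁ = a - 1`, so `p(G) ≥ n - 1 + n/10` for a maximizer `G`. As
`λ₁ ≤ n - 1` for every graph on `n` vertices (Gershgorin), both `λ₁(G)` and `λ₁(Ḡ)` are at least
`n/10`. For a nonnegative unit eigenvector `x` of a matrix with entries at most `1`, taken at a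
vertex `v` where `x` is maximal, `λ x_v = (Ax)_v ≤ ∑ x ≤ √n` by Cauchy–Schwarz, so
`max x ≤ 10/√n`; the lower bound `1/√n` holds for every nonnegative unit vector.
-/

open Finset Matrix

section UnitVector

variable {ι : Type*} [Fintype ι] [Nonempty ι] {x : ι → ℝ}

lemma one_div_sqrt_card_le_iSup (hx : ∀ u, 0 ≤ x u) (hnorm : ∑ u, x u ^ 2 = 1) :
    1 / √(Fintype.card ι) ≤ ⨆ u, x u := by
  obtain ⟨v, hv⟩ := exists_eq_ciSup_of_finite (f := x)
  have hle : ∀ u, x u ≤ x v := fun u => hv ▸ le_ciSup (Finite.bddAbove_range x) u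
  have hcard : (0 : ℝ) < Fintype.card ι := by exact_mod_cast Fintype.card_pos
  have hnorm_le : 1 ≤ Fintype.card ι * x v ^ 2 := by
    calc 1 = ∑ u, x u ^ 2 := hnorm.symm
      _ ≤ ∑ _u : ι, x v ^ 2 := by gcongr with u; exacts [hx u, hle u]
      _ = Fintype.card ι * x v ^ 2 := by simp
  have hsq : (x v * √(Fintype.card ι)) ^ 2 = Fintype.card ι * x v ^ 2 := by
    rw [mul_pow, Real.sq_sqrt hcard.le, mul_comm]
  rw [← hv, div_le_iff₀ (by positivity)]
  nlinarith [mul_nonneg (hx v) (Real.sqrt_nonneg (Fintype.card ι))]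

lemma mul_iSup_le_sqrt_card {A : Matrix ι ι ℝ} {L : ℝ} (hA : ∀ i j, A i j ≤ 1)
    (hx : ∀ u, 0 ≤ x u) (hnorm : ∑ u, x u ^ 2 = 1) (heig : A *ᵥ x = L • x) :
    L * ⨆ u, x u ≤ √(Fintype.card ι) := by
  obtain ⟨v, hv⟩ := exists_eq_ciSup_of_finite (f := x)
  have hsum : (∑ u, x u) ^ 2 ≤ Fintype.card ι := by
    simpa [hnorm] using sq_sum_le_card_mul_sum_sq (s := univ) (f := x)
  calc L * ⨆ u, x u = (A *ᵥ x) v := by simp [heig, hv]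
    _ = ∑ u, A v u * x u := rfl
    _ ≤ ∑ u, x u := by
      gcongr with u; exact mul_le_of_le_one_left (hx u) (hA v u)
    _ ≤ √(Fintype.card ι) := Real.le_sqrt_of_sq_le hsum

lemma iSup_bounds_of_eigenvector {A : Matrix ι ι ℝ} {L c : ℝ} (hc : 0 < c)
    (hA : ∀ i j, A i j ≤ 1) (hx : ∀ u, 0 ≤ x u) (hnorm : ∑ u, x u ^ 2 = 1)
    (heig : A *ᵥ x = L • x) (hL : Fintype.card ι / c ≤ L) :
    1 / √(Fintype.card ι) ≤ ⨆ u, x u ∧ ⨆ u, x u ≤ c / √(Fintype.card ι) := by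
  have hlow := one_div_sqrt_card_le_iSup hx hnorm
  have hup := mul_iSup_le_sqrt_card hA hx hnorm heig
  refine ⟨hlow, ?_⟩
  have hcard : (0 : ℝ) < Fintype.card ι := by exact_mod_cast Fintype.card_pos
  have hsq := Real.sq_sqrt hcard.le
  have hspos := Real.sqrt_pos.2 hcard
  have hM : 0 ≤ ⨆ u, x u := le_trans (by positivity) hlow
  rw [le_div_iff₀ hspos]
  rw [div_le_iff₀ hc] at hL
  nlinarith [mul_le_mul_of_nonneg_right hL hM]

end UnitVector

lemma norm_adjMat_le_one {n : ℕ} (G : SimpleGraph (Fin n)) (i j : Fin n) :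
    ‖adjMat G i j‖ ≤ 1 := by
  classical
  by_cases h : G.Adj i j <;> simp [adjMat, h]

lemma adjMat_le_one {n : ℕ} (G : SimpleGraph (Fin n)) (i j : Fin n) : adjMat G i j ≤ 1 :=
  (Real.le_norm_self _).trans (norm_adjMat_le_one G i j)

lemma mulVec_adjMat_apply {n : ℕ} (G : SimpleGraph (Fin n)) [DecidableRel G.Adj]
    (x : Fin n → ℝ) (v : Fin n) :
    (adjMat G *ᵥ x) v = ∑ u with G.Adj v u, x u := by
  simp [adjMat, Matrix.mulVec, dotProduct, sum_filter, SimpleGraph.adjMatrix_apply]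

lemma le_sub_one_of_mem_eigSet_adjMat {n : ℕ} (G : SimpleGraph (Fin n)) {μ : ℝ}
    (hμ : μ ∈ eigSet (adjMat G)) : μ ≤ n - 1 := by
  obtain ⟨x, hx0, hx⟩ := hμ
  have hμ' : Module.End.HasEigenvalue (toLin' (adjMat G)) μ :=
    Module.End.hasEigenvalue_of_hasEigenvector
      ⟨Module.End.mem_eigenspace_iff.2 (by simpa using hx), hx0⟩
  obtain ⟨k, hk⟩ := eigenvalue_mem_ball hμ'
  have hkk : adjMat G k k = 0 := by simp [adjMat]
  have hrow : ∑ j ∈ univ.erase k, ‖adjMat G k j‖ ≤ n - 1 := by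
    calc ∑ j ∈ univ.erase k, ‖adjMat G k j‖ ≤ ∑ _j ∈ univ.erase k, (1 : ℝ) := by
          gcongr with j
          exact norm_adjMat_le_one G k j
      _ = n - 1 := by simp [Nat.cast_sub (Nat.one_le_of_lt k.2)]
  rw [Metric.mem_closedBall, hkk, Real.dist_0_eq_abs] at hk
  exact (le_abs_self μ).trans (hk.trans hrow)

def completeBipartiteOn {V : Type*} (s : Finset V) : SimpleGraph V where
  Adj u v := ¬(u ∈ s ↔ v ∈ s)
  symm := ⟨fun _ _ h h' => h h'.symm⟩
  loopless := ⟨fun _ h => h Iff.rfl⟩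

instance {V : Type*} [DecidableEq V] (s : Finset V) : DecidableRel (completeBipartiteOn s).Adj :=
  fun u v => show Decidable ¬(u ∈ s ↔ v ∈ s) from inferInstance

@[simp]
lemma completeBipartiteOn_adj {V : Type*} (s : Finset V) (u v : V) :
    (completeBipartiteOn s).Adj u v ↔ ¬(u ∈ s ↔ v ∈ s) := Iff.rfl

section CompleteBipartiteOn

variable {n : ℕ} (s : Finset (Fin n))

lemma filter_completeBipartiteOn_adj {v : Fin n} (hv : v ∈ s) :
    univ.filter ((completeBipartiteOn s).Adj v) = sᶜ := by
  ext u; simp [hv]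

lemma filter_completeBipartiteOn_adj_of_notMem {v : Fin n} (hv : v ∉ s) :
    univ.filter ((completeBipartiteOn s).Adj v) = s := by
  ext u; simp [hv]

lemma filter_completeBipartiteOn_compl_adj {v : Fin n} (hv : v ∈ s) :
    univ.filter ((completeBipartiteOn s)ᶜ.Adj v) = s.erase v := by
  ext u; simp [hv, ne_comm]

lemma sqrt_card_mul_mem_eigSet (hs : s.Nonempty) (hs' : sᶜ.Nonempty) :
    √(#s * #sᶜ) ∈ eigSet (adjMat (completeBipartiteOn s)) := by
  refine ⟨fun u => if u ∈ s then √(#sᶜ : ℝ) else √(#s : ℝ), ?_, ?_⟩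
  · obtain ⟨v, hv⟩ := hs
    refine Function.ne_iff.2 ⟨v, ?_⟩
    rw [if_pos hv]
    exact Real.sqrt_ne_zero'.2 (by exact_mod_cast hs'.card_pos)
  · ext v
    rw [mulVec_adjMat_apply, Real.sqrt_mul (Nat.cast_nonneg _)]
    by_cases hv : v ∈ s
    · rw [filter_completeBipartiteOn_adj s hv, sum_ite_of_false fun u hu => mem_compl.1 hu]
      simp only [sum_const, nsmul_eq_mul, Pi.smul_apply, if_pos hv, smul_eq_mul]
      rw [mul_assoc, Real.mul_self_sqrt (Nat.cast_nonneg _), mul_comm]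
    · rw [filter_completeBipartiteOn_adj_of_notMem s hv, sum_ite_of_true fun u hu => hu]
      simp [hv, mul_right_comm _ √(#sᶜ : ℝ), Real.mul_self_sqrt]

lemma card_sub_one_mem_eigSet (hs : s.Nonempty) :
    (#s - 1 : ℝ) ∈ eigSet (adjMat (completeBipartiteOn s)ᶜ) := by
  refine ⟨fun u => if u ∈ s then 1 else 0, ?_, ?_⟩
  · obtain ⟨v, hv⟩ := hs
    exact Function.ne_iff.2 ⟨v, by simp [hv]⟩
  · ext v
    rw [mulVec_adjMat_apply]
    by_cases hv : v ∈ s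
    · rw [filter_completeBipartiteOn_compl_adj s hv]
      simp [hv, Nat.cast_pred hs.card_pos]
    · rw [Pi.smul_apply, if_neg hv, smul_zero]
      refine sum_eq_zero fun u hu => if_neg ?_
      simp only [mem_filter, SimpleGraph.compl_adj, completeBipartiteOn_adj] at hu
      tauto

end CompleteBipartiteOn

section Lam1

variable {n : ℕ}

lemma bddAbove_eigSet_adjMat (G : SimpleGraph (Fin n)) : BddAbove (eigSet (adjMat G)) :=
  ⟨n - 1, fun _ => le_sub_one_of_mem_eigSet_adjMat G⟩

lemma le_lam1 (G : SimpleGraph (Fin n)) {μ : ℝ} (hμ : μ ∈ eigSet (adjMat G)) : μ ≤ lam1 G :=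
  le_csSup (bddAbove_eigSet_adjMat G) hμ

lemma lam1_le_sub_one (hn : 1 ≤ n) (G : SimpleGraph (Fin n)) : lam1 G ≤ n - 1 :=
  Real.sSup_le (fun _ => le_sub_one_of_mem_eigSet_adjMat G) (by simpa using hn)

lemma exists_lam1_add_lam1_compl_ge (hn : 4 ≤ n) :
    ∃ H : SimpleGraph (Fin n), n - 1 + n / 10 ≤ lam1 H + lam1 Hᶜ := by
  obtain ⟨s, -, hs⟩ := exists_subset_card_eq (s := (univ : Finset (Fin n))) (n := n - n / 4)
    (by simp)
  have hsc : #sᶜ = n / 4 := by rw [card_compl, hs, Fintype.card_fin]; omega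
  have hne : s.Nonempty := card_pos.1 (by omega)
  have hne' : sᶜ.Nonempty := card_pos.1 (by omega)
  have hb : 4 * ((n / 4 : ℕ) : ℝ) ≤ n ∧ (n : ℝ) < 4 * (n / 4 : ℕ) + 4 ∧ 1 ≤ ((n / 4 : ℕ) : ℝ) := by
    refine ⟨?_, ?_, ?_⟩ <;> norm_cast <;> omega
  have hsqrt : (n / 4 : ℕ) + (n : ℝ) / 10 ≤ √(#s * #sᶜ) := by
    refine Real.le_sqrt_of_sq_le ?_
    rw [hs, hsc, Nat.cast_sub (Nat.div_le_self n 4)]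
    nlinarith
  refine ⟨completeBipartiteOn s, ?_⟩
  have h1 := le_lam1 _ (sqrt_card_mul_mem_eigSet s hne hne')
  have h2 := le_lam1 _ (card_sub_one_mem_eigSet s hne)
  rw [hs, Nat.cast_sub (Nat.div_le_self n 4)] at h2
  linarith

lemma div_ten_le_lam1_of_forall_le (hn : 4 ≤ n) {G : SimpleGraph (Fin n)}
    (hmax : ∀ H : SimpleGraph (Fin n), lam1 H + lam1 Hᶜ ≤ lam1 G + lam1 Gᶜ) :
    n / 10 ≤ lam1 G ∧ n / 10 ≤ lam1 Gᶜ := by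
  obtain ⟨H, hH⟩ := exists_lam1_add_lam1_compl_ge hn
  have hG := lam1_le_sub_one (by omega) G
  have hGc := lam1_le_sub_one (by omega) Gᶜ
  constructor <;> linarith [hmax H]

end Lam1

theorem stmt2 :
    ∃ C : ℝ, 0 < C ∧ ∃ N : ℕ, ∀ n : ℕ, N ≤ n →
      ∀ G : SimpleGraph (Fin n), G.Connected →
        (∀ H : SimpleGraph (Fin n), lam1 H + lam1 Hᶜ ≤ lam1 G + lam1 Gᶜ) →
        ∀ x xb : Fin n → ℝ,
          (∀ v, 0 ≤ x v) → (∀ v, 0 ≤ xb v) →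
          (∑ v, x v ^ 2 = 1) → (∑ v, xb v ^ 2 = 1) →
          (adjMat G).mulVec x = lam1 G • x →
          (adjMat Gᶜ).mulVec xb = lam1 Gᶜ • xb →
          (1 / Real.sqrt n ≤ ⨆ u, x u ∧ (⨆ u, x u) ≤ C / Real.sqrt n) ∧
          (1 / Real.sqrt n ≤ ⨆ u, xb u ∧ (⨆ u, xb u) ≤ C / Real.sqrt n) := by
  refine ⟨10, by norm_num, 4, fun n hn G _ hmax x xb hx hxb hxn hxbn hex hexb => ?_⟩
  have : Nonempty (Fin n) := ⟨⟨0, by omega⟩⟩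
  obtain ⟨hG, hGc⟩ := div_ten_le_lam1_of_forall_le hn hmax
  have hcard : ((Fintype.card (Fin n) : ℕ) : ℝ) = n := by rw [Fintype.card_fin]
  rw [← hcard] at hG hGc ⊢
  exact ⟨iSup_bounds_of_eigenvector (by norm_num) (adjMat_le_one G) hx hxn hex hG,
    iSup_bounds_of_eigenvector (by norm_num) (adjMat_le_one Gᶜ) hxb hxbn hexb hGc⟩
end

section
/- There exist constants C > 0 and N such that for every n ≥ N the following holds: if G is a connected simple graph on n vertices maximizing p(G) = λ1(G) + λ1(Ḡ) among all graphs on n vertices, and x, x̄ are nonnegative unit eigenvectors of A(G) and A(Ḡ) for λ1(G) and λ1(Ḡ), then for every pair of vertices u and v, |(λ1(G)·x_u² + λ1(Ḡ)·x̄_u²) − (λ1(G)·x_v² + λ1(Ḡ)·x̄_v²)| ≤ C/n. -/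
open Matrix Finset Function

section Spectrum
variable {n : ℕ}

lemma eigSet_eq_spectrum (M : Matrix (Fin n) (Fin n) ℝ) : eigSet M = spectrum ℝ M := by
  ext μ
  rw [← Matrix.spectrum_toLin', ← Module.End.hasEigenvalue_iff_mem_spectrum,
    Module.End.hasEigenvalue_iff]
  simp only [eigSet, Set.mem_ofPred_eq, Submodule.ne_bot_iff, Module.End.mem_eigenspace_iff,
    Matrix.toLin'_apply]
  exact ⟨fun ⟨x, hx, h⟩ => ⟨x, h, hx⟩, fun ⟨x, h, hx⟩ => ⟨x, hx, h⟩⟩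

lemma le_lamMax {M : Matrix (Fin n) (Fin n) ℝ} {μ : ℝ} (hμ : μ ∈ spectrum ℝ M) :
    μ ≤ lamMax M :=
  le_csSup (eigSet_eq_spectrum M ▸ M.finite_spectrum.bddAbove) (eigSet_eq_spectrum M ▸ hμ)

lemma dotProduct_mulVec_le_lamMax {M : Matrix (Fin n) (Fin n) ℝ} (hM : M.IsHermitian)
    (x : Fin n → ℝ) : x ⬝ᵥ M *ᵥ x ≤ lamMax M * (x ⬝ᵥ x) := by
  have hpsd : (algebraMap ℝ _ (lamMax M) - M).PosSemidef := by
    refine posSemidef_iff_isHermitian_and_spectrum_nonneg.mpr ⟨?_, ?_⟩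
    · rw [Algebra.algebraMap_eq_smul_one]
      exact (isHermitian_one.smul (IsSelfAdjoint.all (lamMax M))).sub hM
    · rw [← spectrum.singleton_sub_eq]
      rintro _ ⟨_, rfl, μ, hμ, rfl⟩
      exact sub_nonneg.mpr (le_lamMax hμ)
  simpa [Algebra.algebraMap_eq_smul_one, sub_mulVec, dotProduct_sub, smul_mulVec,
    dotProduct_smul] using hpsd.dotProduct_mulVec_nonneg x

end Spectrum

section UpdateId
variable {ι R : Type*} [Fintype ι] [DecidableEq ι] [CommRing R]

lemma sum_comp_update_id {M : Type*} [AddCommGroup M] (F : ι → M) (p q : ι) :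
    ∑ a, F (update id p q a) = ∑ a, F a - F p + F q := by
  rw [← add_sum_erase _ _ (mem_univ p), ← add_sum_erase _ F (mem_univ p),
    sum_congr rfl fun a ha => by rw [update_of_ne (ne_of_mem_erase ha), id]]
  simp only [update_self]
  abel

lemma dotProduct_comp_update_id (x : ι → R) (p q : ι) :
    (x ∘ update id p q) ⬝ᵥ (x ∘ update id p q) = x ⬝ᵥ x - x p ^ 2 + x q ^ 2 := by
  simp only [dotProduct, Function.comp_apply, sq]
  exact sum_comp_update_id (fun a => x a * x a) p q

lemma dotProduct_submatrix_mulVec_update_id {M : Matrix ι ι R} (hM : M.IsSymm) (x : ι → R)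
    (p q : ι) :
    (x ∘ update id p q) ⬝ᵥ M.submatrix (update id p q) (update id p q) *ᵥ (x ∘ update id p q) =
      x ⬝ᵥ M *ᵥ x + 2 * (x q * (M *ᵥ x) q - x p * (M *ᵥ x) p)
        + M p p * x p ^ 2 + M q q * x q ^ 2 - 2 * M p q * x p * x q := by
  set h : ι → ι → R := fun c d => x c * (M c d * x d)
  have hrow : ∀ c, ∑ d, h c d = x c * (M *ᵥ x) c := fun c => by
    simp [h, mulVec, dotProduct, mul_sum]
  have hcol : ∀ d, ∑ c, h c d = x d * (M *ᵥ x) d := fun d => by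
    rw [← hrow]
    refine sum_congr rfl fun c _ => ?_
    simp only [h, ← transpose_apply M c d, hM.eq]; ring
  have hpq : M q p = M p q := hM.apply p q
  calc (x ∘ update id p q) ⬝ᵥ M.submatrix (update id p q) (update id p q) *ᵥ (x ∘ update id p q)
      = ∑ a, ∑ b, h (update id p q a) (update id p q b) := by
        simp [h, dotProduct, mulVec, mul_sum]
    _ = ∑ a, ∑ b, h a b - ∑ b, h p b + ∑ b, h q b - (∑ a, h a p - h p p + h q p)
          + (∑ a, h a q - h p q + h q q) := by
        simp only [sum_comp_update_id, sum_add_distrib, sum_sub_distrib]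
        rw [sum_comp_update_id (fun c => ∑ b, h c b), sum_comp_update_id (fun c => h c p),
          sum_comp_update_id (fun c => h c q)]
    _ = _ := by
        simp only [hrow, hcol, h, dotProduct, hpq]
        ring

end UpdateId

/-- Here `d` and `d'` stand for the changes of `λ₁(G)` and `λ₁(Gᶜ)` when a vertex of `G` is
replaced by a copy of another one. -/
lemma add_le_of_exchange {μ ν s t e f d d' ε K : ℝ} (hdd : d + d' ≤ 0)
    (hd : μ * s - e ≤ d * (1 + s)) (hd' : ν * t - f ≤ d' * (1 + t))
    (hs : |s| ≤ ε) (ht : |t| ≤ ε) (hε : ε ≤ 1 / 2) (hμ : 0 ≤ μ) (hν : 0 ≤ ν)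
    (hμK : μ * ε ≤ K) (hνK : ν * ε ≤ K) (he : e ≤ K) (hf : f ≤ K) :
    μ * s + ν * t ≤ e + f + 8 * K * ε := by
  obtain ⟨hs₁, hs₂⟩ := abs_le.mp hs
  obtain ⟨ht₁, ht₂⟩ := abs_le.mp ht
  have hK : 0 ≤ K := le_trans (mul_nonneg hμ (le_trans (abs_nonneg s) hs)) hμK
  have hd_lo : -(4 * K) ≤ d := by nlinarith
  have hd'_lo : -(4 * K) ≤ d' := by nlinarith
  have hds : d * s ≤ 4 * K * ε :=
    calc d * s ≤ |d| * |s| := by rw [← abs_mul]; exact le_abs_self _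
      _ ≤ 4 * K * ε :=
        mul_le_mul (abs_le.mpr ⟨hd_lo, by linarith⟩) hs (abs_nonneg _) (by positivity)
  have hd't : d' * t ≤ 4 * K * ε :=
    calc d' * t ≤ |d'| * |t| := by rw [← abs_mul]; exact le_abs_self _
      _ ≤ 4 * K * ε :=
        mul_le_mul (abs_le.mpr ⟨hd'_lo, by linarith⟩) ht (abs_nonneg _) (by positivity)
  linarith

namespace SimpleGraph

lemma replaceVertex_eq_comap {V : Type*} [DecidableEq V] (H : SimpleGraph V) (s t : V) :
    H.replaceVertex s t = H.comap (update id t s) := by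
  ext v w
  by_cases hv : v = t <;> by_cases hw : w = t <;> simp [replaceVertex, hv, hw]

lemma compl_replaceVertex_le {V : Type*} [DecidableEq V] (H : SimpleGraph V) (s t : V) :
    Hᶜ.replaceVertex s t ≤ (H.replaceVertex s t)ᶜ := by
  rw [replaceVertex_eq_comap, replaceVertex_eq_comap]
  exact fun _ _ ⟨hne, hnadj⟩ => ⟨fun h => hne (congrArg _ h), hnadj⟩

section AdjMat
variable {n : ℕ} (H : SimpleGraph (Fin n))

open scoped Classical in
lemma adjMat_apply (a b : Fin n) : adjMat H a b = if H.Adj a b then 1 else 0 := by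
  simp only [adjMat, adjMatrix_apply]

lemma isHermitian_adjMat : (adjMat H).IsHermitian := by
  classical
  exact isHermitian_adjMatrix ..

lemma isSymm_adjMat : (adjMat H).IsSymm := by
  classical
  exact isSymm_adjMatrix ..

lemma adjMat_comap (f : Fin n → Fin n) : adjMat (H.comap f) = (adjMat H).submatrix f f := by
  ext a b; simp only [adjMat_apply, submatrix_apply]; rfl

lemma dotProduct_mulVec_le_lam1 (x : Fin n → ℝ) : x ⬝ᵥ adjMat H *ᵥ x ≤ lam1 H * (x ⬝ᵥ x) :=
  dotProduct_mulVec_le_lamMax H.isHermitian_adjMat x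

lemma le_card_sub_one_of_mulVec_eq {μ : ℝ} {x : Fin n → ℝ} (hx : adjMat H *ᵥ x = μ • x)
    (hx0 : x ≠ 0) : μ ≤ n - 1 := by
  have hμ : μ ∈ eigSet (adjMat H) := ⟨x, hx0, hx⟩
  rw [eigSet_eq_spectrum, ← Matrix.spectrum_toLin', ← Module.End.hasEigenvalue_iff_mem_spectrum]
    at hμ
  obtain ⟨k, hk⟩ := eigenvalue_mem_ball hμ
  rw [Metric.mem_closedBall, Real.dist_eq] at hk
  have hrow : ∑ j ∈ univ.erase k, ‖adjMat H k j‖ ≤ n - 1 := by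
    calc ∑ j ∈ univ.erase k, ‖adjMat H k j‖ ≤ ∑ j ∈ univ.erase k, (1 : ℝ) :=
          sum_le_sum fun j _ => by rw [adjMat_apply]; split_ifs <;> simp
      _ = n - 1 := by simp [Nat.cast_pred k.pos]
  rw [H.adjMat_apply k k, if_neg (H.loopless.irrefl k), sub_zero] at hk
  linarith [le_abs_self μ]

lemma sq_mul_sq_le_card {μ : ℝ} {x : Fin n → ℝ} (hx : adjMat H *ᵥ x = μ • x)
    (hx1 : ∑ v, x v ^ 2 = 1) (u : Fin n) : μ ^ 2 * x u ^ 2 ≤ n := by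
  have hrow : μ * x u = ∑ b, adjMat H u b * x b := by
    rw [← smul_eq_mul, ← Pi.smul_apply, ← hx]; rfl
  calc μ ^ 2 * x u ^ 2 = (∑ b, adjMat H u b * x b) ^ 2 := by rw [← hrow]; ring
    _ ≤ (∑ b, adjMat H u b ^ 2) * ∑ b, x b ^ 2 := sum_mul_sq_le_sq_mul_sq _ _ _
    _ ≤ ∑ _b : Fin n, (1 : ℝ) := by
        rw [hx1, mul_one]
        exact sum_le_sum fun b _ => by rw [adjMat_apply]; split_ifs <;> simp
    _ = n := by simp

lemma dotProduct_adjMat_mulVec_mono {H₁ H₂ : SimpleGraph (Fin n)} (h : H₁ ≤ H₂)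
    {y : Fin n → ℝ} (hy : ∀ a, 0 ≤ y a) :
    y ⬝ᵥ adjMat H₁ *ᵥ y ≤ y ⬝ᵥ adjMat H₂ *ᵥ y := by
  simp only [dotProduct, mulVec]
  gcongr with a _ b _
  · exact hy a
  · exact hy b
  · rw [adjMat_apply, adjMat_apply]
    split_ifs with h₁ h₂ <;> first | exact absurd (h h₁) h₂ | norm_num

end AdjMat

variable {n : ℕ}

/-- The left side is the quadratic form of `adjMat (H.replaceVertex q p)` at `x` with its
`p`-entry replaced by `x q`. -/
lemma le_lam1_of_replaceVertex_le {H H' : SimpleGraph (Fin n)} {p q : Fin n}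
    (hH : H.replaceVertex q p ≤ H') {μ : ℝ} {x : Fin n → ℝ} (hx0 : ∀ a, 0 ≤ x a)
    (hx : adjMat H *ᵥ x = μ • x) (hx1 : ∑ v, x v ^ 2 = 1) :
    μ * (1 + 2 * (x q ^ 2 - x p ^ 2)) - 2 * adjMat H p q * x p * x q ≤
      lam1 H' * (1 + (x q ^ 2 - x p ^ 2)) := by
  have hxx : x ⬝ᵥ x = 1 := by simpa [dotProduct, sq] using hx1
  have hdiag : ∀ a, adjMat H a a = 0 := fun a => by simp [adjMat_apply]
  set y := x ∘ update id p q
  have hquad : y ⬝ᵥ adjMat (H.replaceVertex q p) *ᵥ y =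
      μ * (1 + 2 * (x q ^ 2 - x p ^ 2)) - 2 * adjMat H p q * x p * x q := by
    rw [replaceVertex_eq_comap, adjMat_comap,
      dotProduct_submatrix_mulVec_update_id H.isSymm_adjMat x p q, hx, dotProduct_smul, hxx,
      hdiag, hdiag]
    simp only [Pi.smul_apply, smul_eq_mul]
    ring
  calc _ = y ⬝ᵥ adjMat (H.replaceVertex q p) *ᵥ y := hquad.symm
    _ ≤ y ⬝ᵥ adjMat H' *ᵥ y := dotProduct_adjMat_mulVec_mono hH fun a => hx0 _
    _ ≤ lam1 H' * (y ⬝ᵥ y) := H'.dotProduct_mulVec_le_lam1 y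
    _ = _ := by rw [dotProduct_comp_update_id, hxx]; ring

lemma sum_adjMat_le_lam1_mul_card (H : SimpleGraph (Fin n)) :
    ∑ a, ∑ b, adjMat H a b ≤ lam1 H * n := by
  simpa [dotProduct, mulVec] using H.dotProduct_mulVec_le_lam1 (fun _ => 1)

lemma sum_adjMat_add_sum_adjMat_compl (H : SimpleGraph (Fin n)) :
    ∑ a, ∑ b, adjMat H a b + ∑ a, ∑ b, adjMat Hᶜ a b = n * (n - 1) := by
  have hentry : ∀ a b, adjMat H a b + adjMat Hᶜ a b = 1 - if a = b then 1 else 0 := by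
    intro a b
    by_cases hab : a = b
    · simp [adjMat_apply, hab]
    · by_cases h : H.Adj a b <;> simp [adjMat_apply, compl_adj, hab, h]
  simp only [← sum_add_distrib, hentry, sum_sub_distrib, sum_ite_eq, mem_univ, if_true]
  simp [mul_sub]

variable {K : SimpleGraph (Fin n)} {S : Finset (Fin n)}

lemma sum_adjMat_eq_of_adj_iff (hK : ∀ a b, K.Adj a b ↔ a ≠ b ∧ a ∈ S ∧ b ∈ S) :
    ∑ a, ∑ b, adjMat K a b = #S * (#S - 1) := by
  have hentry : ∀ a b, adjMat K a b =
      if a ∈ S then (if b ∈ S then 1 - (if a = b then 1 else 0) else 0) else 0 := by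
    intro a b
    by_cases ha : a ∈ S <;> by_cases hb : b ∈ S <;> by_cases hab : a = b <;>
      simp [adjMat_apply, hK, ha, hb, hab]
  simp +contextual [hentry, mul_sub]

lemma card_sub_one_le_lam1_of_adj_iff (hK : ∀ a b, K.Adj a b ↔ a ≠ b ∧ a ∈ S ∧ b ∈ S)
    (hS : S.Nonempty) : (#S : ℝ) - 1 ≤ lam1 K := by
  set y : Fin n → ℝ := fun a => if a ∈ S then 1 else 0
  have hquad : y ⬝ᵥ adjMat K *ᵥ y = #S * (#S - 1) := by
    rw [← sum_adjMat_eq_of_adj_iff hK]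
    simp only [dotProduct, mulVec, mul_sum]
    refine sum_congr rfl fun a _ => sum_congr rfl fun b _ => ?_
    by_cases ha : a ∈ S <;> by_cases hb : b ∈ S <;> simp [y, adjMat_apply, hK, ha, hb]
  have hyy : y ⬝ᵥ y = #S := by simp [y, dotProduct]
  have hle := K.dotProduct_mulVec_le_lam1 y
  rw [hquad, hyy] at hle
  have hpos : (0 : ℝ) < #S := by exact_mod_cast hS.card_pos
  nlinarith

lemma compl_CS_adj_iff {w : ℕ} (hw : w < n) (a b : Fin n) :
    (CS n w)ᶜ.Adj a b ↔ a ≠ b ∧ a ∈ Ici ⟨w, hw⟩ ∧ b ∈ Ici ⟨w, hw⟩ := by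
  simp [CS, Fin.le_def]
  tauto

lemma exists_five_mul_card_div_four_le (hn : 2 ≤ n) :
    ∃ H : SimpleGraph (Fin n), 5 * n / 4 - 9 / 4 ≤ lam1 H + lam1 Hᶜ := by
  have hw : n - n / 2 < n := by omega
  have hadj := compl_CS_adj_iff hw
  have hk : #(Ici (⟨n - n / 2, hw⟩ : Fin n)) = n / 2 := by rw [Fin.card_Ici]; simp only; omega
  have hclique := card_sub_one_le_lam1_of_adj_iff hadj ⟨_, mem_Ici.mpr le_rfl⟩
  have hedges := sum_adjMat_add_sum_adjMat_compl (CS n (n - n / 2))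
  rw [sum_adjMat_eq_of_adj_iff hadj, hk] at hedges
  rw [hk] at hclique
  have havg := sum_adjMat_le_lam1_mul_card (CS n (n - n / 2))
  have h2k : 2 * ((n / 2 : ℕ) : ℝ) ≤ n := by exact_mod_cast Nat.mul_div_le n 2
  have h2k' : (n : ℝ) ≤ 2 * ((n / 2 : ℕ) : ℝ) + 1 := by norm_cast; omega
  refine ⟨CS n (n - n / 2), le_of_mul_le_mul_right ?_ (by positivity : (0 : ℝ) < n)⟩
  nlinarith [mul_nonneg (sub_nonneg.mpr h2k) (sub_nonneg.mpr h2k')]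

lemma card_div_five_le_lam1 {G : SimpleGraph (Fin n)} (hn : 25 ≤ n)
    (hmax : ∀ H : SimpleGraph (Fin n), lam1 H + lam1 Hᶜ ≤ lam1 G + lam1 Gᶜ) {y : Fin n → ℝ}
    (hy : adjMat Gᶜ *ᵥ y = lam1 Gᶜ • y) (hy0 : y ≠ 0) : (n : ℝ) / 5 ≤ lam1 G := by
  obtain ⟨H, hH⟩ := exists_five_mul_card_div_four_le (n := n) (by omega)
  have hn' : (25 : ℝ) ≤ n := by exact_mod_cast hn
  linarith [hmax H, Gᶜ.le_card_sub_one_of_mulVec_eq hy hy0]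

lemma sq_le_of_card_div_five_le (H : SimpleGraph (Fin n)) {μ : ℝ} {x : Fin n → ℝ}
    (hμ : (n : ℝ) / 5 ≤ μ) (hx : adjMat H *ᵥ x = μ • x) (hx1 : ∑ v, x v ^ 2 = 1) (u : Fin n) :
    x u ^ 2 ≤ 25 / n := by
  rcases Nat.eq_zero_or_pos n with rfl | hn
  · exact u.elim0
  have hn' : (0 : ℝ) < n := by exact_mod_cast hn
  have hsq : ((n : ℝ) / 5) ^ 2 * x u ^ 2 ≤ μ ^ 2 * x u ^ 2 := by gcongr
  rw [le_div_iff₀ hn']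
  nlinarith [H.sq_mul_sq_le_card hx hx1 u]

lemma two_mul_adjMat_mul_le (H : SimpleGraph (Fin n)) {x : Fin n → ℝ} (hx0 : ∀ a, 0 ≤ x a)
    (p q : Fin n) : 2 * adjMat H p q * x p * x q ≤ x p ^ 2 + x q ^ 2 := by
  have hA : adjMat H p q ≤ 1 := by rw [adjMat_apply]; split_ifs <;> norm_num
  nlinarith [mul_nonneg (hx0 p) (hx0 q), sq_nonneg (x p - x q)]

lemma lam1_mul_sq_add_sub_le {G : SimpleGraph (Fin n)} (hn : 50 ≤ n)
    (hmax : ∀ H : SimpleGraph (Fin n), lam1 H + lam1 Hᶜ ≤ lam1 G + lam1 Gᶜ)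
    {x xb : Fin n → ℝ} (hx0 : ∀ v, 0 ≤ x v) (hxb0 : ∀ v, 0 ≤ xb v)
    (hx1 : ∑ v, x v ^ 2 = 1) (hxb1 : ∑ v, xb v ^ 2 = 1)
    (hx : adjMat G *ᵥ x = lam1 G • x) (hxb : adjMat Gᶜ *ᵥ xb = lam1 Gᶜ • xb)
    (hμ : (n : ℝ) / 5 ≤ lam1 G) (hν : (n : ℝ) / 5 ≤ lam1 Gᶜ)
    (hμn : lam1 G ≤ n - 1) (hνn : lam1 Gᶜ ≤ n - 1) (p q : Fin n) :
    (lam1 G * x q ^ 2 + lam1 Gᶜ * xb q ^ 2) - (lam1 G * x p ^ 2 + lam1 Gᶜ * xb p ^ 2) ≤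
      5100 / n := by
  have hn' : (0 : ℝ) < n := by positivity
  have hxε := G.sq_le_of_card_div_five_le hμ hx hx1
  have hxbε := Gᶜ.sq_le_of_card_div_five_le hν hxb hxb1
  have h₁ := le_lam1_of_replaceVertex_le (H' := G.replaceVertex q p) le_rfl hx0 hx hx1
  have h₂ := le_lam1_of_replaceVertex_le (G.compl_replaceVertex_le q p) hxb0 hxb hxb1
  have he := G.two_mul_adjMat_mul_le hx0 p q
  have hf := Gᶜ.two_mul_adjMat_mul_le hxb0 p q
  have hε : (25 : ℝ) / n ≤ 1 / 2 := by
    rw [div_le_iff₀ hn']; linarith [show (50 : ℝ) ≤ n by exact_mod_cast hn]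
  have hmulε : ∀ μ : ℝ, μ ≤ n - 1 → μ * (25 / n) ≤ 25 := fun μ h => by
    rw [← mul_div_assoc, div_le_iff₀ hn']; linarith
  have key := add_le_of_exchange (e := 2 * adjMat G p q * x p * x q)
    (f := 2 * adjMat Gᶜ p q * xb p * xb q) (d := lam1 (G.replaceVertex q p) - lam1 G)
    (d' := lam1 (G.replaceVertex q p)ᶜ - lam1 Gᶜ) (by linarith [hmax (G.replaceVertex q p)])
    (by linear_combination h₁) (by linear_combination h₂)
    (abs_sub_le_of_nonneg_of_le (sq_nonneg _) (hxε q) (sq_nonneg _) (hxε p))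
    (abs_sub_le_of_nonneg_of_le (sq_nonneg _) (hxbε q) (sq_nonneg _) (hxbε p))
    hε (by linarith) (by linarith) (hmulε _ hμn) (hmulε _ hνn)
    (by linarith [hxε p, hxε q]) (by linarith [hxbε p, hxbε q])
  rw [show (5100 : ℝ) / n = 4 * (25 / n) + 8 * 25 * (25 / n) by ring]
  linarith [hxε p, hxε q, hxbε p, hxbε q]

end SimpleGraph

theorem stmt3 :
    ∃ C : ℝ, 0 < C ∧ ∃ N : ℕ, ∀ n : ℕ, N ≤ n →
      ∀ G : SimpleGraph (Fin n), G.Connected →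
        (∀ H : SimpleGraph (Fin n), lam1 H + lam1 Hᶜ ≤ lam1 G + lam1 Gᶜ) →
        ∀ x xb : Fin n → ℝ,
          (∀ v, 0 ≤ x v) → (∀ v, 0 ≤ xb v) →
          (∑ v, x v ^ 2 = 1) → (∑ v, xb v ^ 2 = 1) →
          (adjMat G).mulVec x = lam1 G • x →
          (adjMat Gᶜ).mulVec xb = lam1 Gᶜ • xb →
          ∀ u v : Fin n,
            |(lam1 G * x u ^ 2 + lam1 Gᶜ * xb u ^ 2) -
              (lam1 G * x v ^ 2 + lam1 Gᶜ * xb v ^ 2)| ≤ C / n := by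
  refine ⟨5100, by norm_num, 50, fun n hn G _ hmax x xb hx0 hxb0 hx1 hxb1 hx hxb u v => ?_⟩
  have hx_ne : x ≠ 0 := fun h => by simp [h] at hx1
  have hxb_ne : xb ≠ 0 := fun h => by simp [h] at hxb1
  have hmaxc : ∀ H : SimpleGraph (Fin n), lam1 H + lam1 Hᶜ ≤ lam1 Gᶜ + lam1 Gᶜᶜ := fun H => by
    rw [compl_compl, add_comm (lam1 Gᶜ)]; exact hmax H
  have key := G.lam1_mul_sq_add_sub_le hn hmax hx0 hxb0 hx1 hxb1 hx hxb
    (G.card_div_five_le_lam1 (by omega) hmax hxb hxb_ne)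
    (Gᶜ.card_div_five_le_lam1 (by omega) hmaxc (by rwa [compl_compl]) hx_ne)
    (G.le_card_sub_one_of_mulVec_eq hx hx_ne) (Gᶜ.le_card_sub_one_of_mulVec_eq hxb hxb_ne)
  exact abs_sub_le_iff.mpr ⟨key v u, key u v⟩
end

section
/- Let n ≥ 6 and let G be a graph maximizing the Q-spread s_Q among all connected graphs on n vertices. Then q1(G) > 2n − 5 and qn(G) < 3. -/
/-! `K_{n-1}^+` is connected, and the Rayleigh quotients of its signless Laplacian at the
indicator of the clique and at the vector equal to `n - 1` on the pendant vertex and `-1` on its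
neighbour give `q₁(K_{n-1}^+) > 2n - 4` and `qₙ(K_{n-1}^+) < 1`; hence a maximiser has
`s_Q(G) > 2n - 5`. On the other hand `Q = R Rᵀ` for the vertex-edge incidence matrix `R`, and
`2D - Q` is the Laplacian, so every signless Laplacian spectrum lies in `[0, 2n - 2]`. Then
`q₁(G) = s_Q(G) + qₙ(G) > 2n - 5` and `qₙ(G) = q₁(G) - s_Q(G) < 3`. -/

open Matrix Finset

lemma exists_dotProduct_mulVec_eq_of_mem_eigSet {n : ℕ} {M : Matrix (Fin n) (Fin n) ℝ} {μ : ℝ}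
    (hμ : μ ∈ eigSet M) : ∃ x : Fin n → ℝ, 0 < x ⬝ᵥ x ∧ x ⬝ᵥ M *ᵥ x = μ * (x ⬝ᵥ x) := by
  obtain ⟨x, hx0, hx⟩ := hμ
  refine ⟨x, dotProduct_self_star_pos_iff.mpr hx0, ?_⟩
  rw [hx, dotProduct_smul, smul_eq_mul]

lemma eigSet_subset_Icc {n : ℕ} {M : Matrix (Fin n) (Fin n) ℝ} {a b : ℝ}
    (h : ∀ x, a * (x ⬝ᵥ x) ≤ x ⬝ᵥ M *ᵥ x ∧ x ⬝ᵥ M *ᵥ x ≤ b * (x ⬝ᵥ x)) :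
    eigSet M ⊆ Set.Icc a b := by
  intro μ hμ
  obtain ⟨x, hx, hμx⟩ := exists_dotProduct_mulVec_eq_of_mem_eigSet hμ
  obtain ⟨hlow, hup⟩ := h x
  rw [hμx] at hlow hup
  exact ⟨le_of_mul_le_mul_right hlow hx, le_of_mul_le_mul_right hup hx⟩

namespace Matrix.IsHermitian

variable {n : ℕ} {M : Matrix (Fin n) (Fin n) ℝ}

lemma eigenvalues_mem_eigSet (hM : M.IsHermitian) (i : Fin n) : hM.eigenvalues i ∈ eigSet M :=
  ⟨_, (WithLp.ofLp_eq_zero 2).ne.2 <| hM.eigenvectorBasis.orthonormal.ne_zero i,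
    hM.mulVec_eigenvectorBasis i⟩

lemma exists_dotProduct_mulVec_eq_sum_eigenvalues (hM : M.IsHermitian) (x : Fin n → ℝ) :
    ∃ y : Fin n → ℝ, x ⬝ᵥ x = ∑ i, y i ^ 2 ∧ x ⬝ᵥ M *ᵥ x = ∑ i, hM.eigenvalues i * y i ^ 2 := by
  set U : Matrix (Fin n) (Fin n) ℝ := (hM.eigenvectorUnitary : Matrix (Fin n) (Fin n) ℝ)
  have hUU : U * Uᵀ = 1 := by
    simpa [U, star_eq_conjTranspose] using mem_unitaryGroup_iff.mp hM.eigenvectorUnitary.2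
  have hM' : M = U * diagonal hM.eigenvalues * Uᵀ := by
    conv_lhs => rw [hM.spectral_theorem, Unitary.conjStarAlgAut_apply]
    simp [U, star_eq_conjTranspose]
  have hconj : ∀ (A : Matrix (Fin n) (Fin n) ℝ) (v : Fin n → ℝ),
      v ⬝ᵥ (U * A * Uᵀ) *ᵥ v = (Uᵀ *ᵥ v) ⬝ᵥ A *ᵥ (Uᵀ *ᵥ v) := by
    intro A v
    rw [← mulVec_mulVec, ← mulVec_mulVec, dotProduct_mulVec, ← mulVec_transpose]
  refine ⟨Uᵀ *ᵥ x, ?_, ?_⟩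
  · have hnorm := hconj 1 x
    rw [Matrix.mul_one, hUU, one_mulVec, one_mulVec] at hnorm
    rw [hnorm]
    simp only [dotProduct, sq]
  · calc x ⬝ᵥ M *ᵥ x = (Uᵀ *ᵥ x) ⬝ᵥ diagonal hM.eigenvalues *ᵥ (Uᵀ *ᵥ x) := by
          rw [← hconj, ← hM']
      _ = _ := sum_congr rfl fun i _ => by rw [mulVec_diagonal]; ring

lemma dotProduct_mulVec_le_of_eigenvalues_le (hM : M.IsHermitian) {c : ℝ}
    (hc : ∀ i, hM.eigenvalues i ≤ c) (x : Fin n → ℝ) : x ⬝ᵥ M *ᵥ x ≤ c * (x ⬝ᵥ x) := by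
  obtain ⟨y, hxx, hxMx⟩ := hM.exists_dotProduct_mulVec_eq_sum_eigenvalues x
  rw [hxx, hxMx, mul_sum]
  exact sum_le_sum fun i _ => mul_le_mul_of_nonneg_right (hc i) (sq_nonneg _)

lemma le_dotProduct_mulVec_of_le_eigenvalues (hM : M.IsHermitian) {c : ℝ}
    (hc : ∀ i, c ≤ hM.eigenvalues i) (x : Fin n → ℝ) : c * (x ⬝ᵥ x) ≤ x ⬝ᵥ M *ᵥ x := by
  obtain ⟨y, hxx, hxMx⟩ := hM.exists_dotProduct_mulVec_eq_sum_eigenvalues x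
  rw [hxx, hxMx, mul_sum]
  exact sum_le_sum fun i _ => mul_le_mul_of_nonneg_right (hc i) (sq_nonneg _)

lemma exists_eigSet_subset_Icc (hM : M.IsHermitian) : ∃ a b, eigSet M ⊆ Set.Icc a b := by
  obtain ⟨a, ha⟩ := (Set.finite_range hM.eigenvalues).bddBelow
  obtain ⟨b, hb⟩ := (Set.finite_range hM.eigenvalues).bddAbove
  exact ⟨a, b, eigSet_subset_Icc fun x =>
    ⟨hM.le_dotProduct_mulVec_of_le_eigenvalues (fun i => ha ⟨i, rfl⟩) x,
      hM.dotProduct_mulVec_le_of_eigenvalues_le (fun i => hb ⟨i, rfl⟩) x⟩⟩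

lemma bddBelow_eigSet (hM : M.IsHermitian) : BddBelow (eigSet M) :=
  let ⟨_, _, h⟩ := hM.exists_eigSet_subset_Icc
  bddBelow_Icc.mono h

lemma bddAbove_eigSet (hM : M.IsHermitian) : BddAbove (eigSet M) :=
  let ⟨_, _, h⟩ := hM.exists_eigSet_subset_Icc
  bddAbove_Icc.mono h

lemma lamMin_mul_le_dotProduct_mulVec (hM : M.IsHermitian) (x : Fin n → ℝ) :
    lamMin M * (x ⬝ᵥ x) ≤ x ⬝ᵥ M *ᵥ x :=
  hM.le_dotProduct_mulVec_of_le_eigenvalues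
    (fun i => csInf_le hM.bddBelow_eigSet (hM.eigenvalues_mem_eigSet i)) x

lemma dotProduct_mulVec_le_lamMax_mul (hM : M.IsHermitian) (x : Fin n → ℝ) :
    x ⬝ᵥ M *ᵥ x ≤ lamMax M * (x ⬝ᵥ x) :=
  hM.dotProduct_mulVec_le_of_eigenvalues_le
    (fun i => le_csSup hM.bddAbove_eigSet (hM.eigenvalues_mem_eigSet i)) x

end Matrix.IsHermitian

namespace SimpleGraph

variable {n : ℕ} (G : SimpleGraph (Fin n))

section Decidable

variable [DecidableRel G.Adj]

lemma adjMat_eq : adjMat G = G.adjMatrix ℝ := by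
  unfold adjMat
  congr

lemma deg_eq_degree (v : Fin n) : deg G v = G.degree v := by
  rw [deg, Nat.card_eq_fintype_card, ← card_neighborSet_eq_degree]
  rfl

lemma signlessLap_eq : signlessLap G = G.degMatrix ℝ + G.adjMatrix ℝ := by
  simp only [signlessLap, deg_eq_degree, adjMat_eq, degMatrix]

lemma signlessLap_eq_incMatrix_mul_transpose :
    signlessLap G = G.incMatrix ℝ * (G.incMatrix ℝ)ᵀ := by
  rw [incMatrix_mul_transpose, signlessLap_eq]
  ext a b
  by_cases hab : a = b
  · subst hab
    simp [degMatrix]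
  · simp [degMatrix, hab]

lemma signlessLap_add_lapMatrix : signlessLap G + G.lapMatrix ℝ = 2 • G.degMatrix ℝ := by
  rw [signlessLap_eq, lapMatrix]
  abel

lemma dotProduct_signlessLap_mulVec (x : Fin n → ℝ) :
    x ⬝ᵥ signlessLap G *ᵥ x = ∑ i, ∑ j, if G.Adj i j then x i * (x i + x j) else 0 := by
  simp only [signlessLap_eq, add_mulVec, dotProduct_add, dotProduct_mulVec_degMatrix,
    dotProduct_mulVec_adjMatrix, degree_eq_sum_if_adj, sum_mul, ← sum_add_distrib]
  refine sum_congr rfl fun i _ => sum_congr rfl fun j _ => ?_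
  split_ifs <;> ring

end Decidable

lemma posSemidef_signlessLap : (signlessLap G).PosSemidef := by
  classical
  rw [signlessLap_eq_incMatrix_mul_transpose]
  exact posSemidef_self_mul_conjTranspose _

lemma dotProduct_signlessLap_mulVec_le (x : Fin n → ℝ) :
    x ⬝ᵥ signlessLap G *ᵥ x ≤ (2 * n - 2) * (x ⬝ᵥ x) := by
  classical
  have hsum := congrArg (fun A => x ⬝ᵥ A *ᵥ x) G.signlessLap_add_lapMatrix
  simp only [add_mulVec, dotProduct_add, dotProduct_mulVec_degMatrix, two_smul] at hsum
  have hlap : 0 ≤ x ⬝ᵥ G.lapMatrix ℝ *ᵥ x := by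
    simpa using (G.posSemidef_lapMatrix ℝ).dotProduct_mulVec_nonneg x
  have hdeg : ∑ i, (G.degree i : ℝ) * x i * x i ≤ (n - 1) * (x ⬝ᵥ x) := by
    rw [dotProduct, mul_sum]
    refine sum_le_sum fun i _ => ?_
    have : (G.degree i + 1 : ℝ) ≤ n := by
      exact_mod_cast Fintype.card_fin n ▸ G.degree_lt_card_verts i
    nlinarith [mul_self_nonneg (x i)]
  linarith

lemma eigSet_signlessLap_subset_Icc : eigSet (signlessLap G) ⊆ Set.Icc 0 (2 * n - 2) :=
  eigSet_subset_Icc fun x => ⟨by simpa using G.posSemidef_signlessLap.dotProduct_mulVec_nonneg x,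
    G.dotProduct_signlessLap_mulVec_le x⟩

lemma qmin_nonneg : 0 ≤ qmin G :=
  Real.sInf_nonneg fun _ hμ => (G.eigSet_signlessLap_subset_Icc hμ).1

lemma q1_le_two_mul_sub_two (hn : 0 < n) : q1 G ≤ 2 * n - 2 :=
  Real.sSup_le (fun _ hμ => (G.eigSet_signlessLap_subset_Icc hμ).2) (by
    have : (1 : ℝ) ≤ n := by exact_mod_cast hn
    linarith)

end SimpleGraph

lemma kPlus_connected {n : ℕ} (hn : 0 < n) : (KPlus n).Connected := by
  have hstar : ∀ v : Fin n, (KPlus n).Reachable v ⟨0, hn⟩ := fun v =>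
    if hv : v = ⟨0, hn⟩ then hv ▸ .rfl else SimpleGraph.Adj.reachable ⟨hv, Or.inr (Or.inr rfl)⟩
  exact (SimpleGraph.connected_iff _).mpr ⟨fun u v => (hstar u).trans (hstar v).symm, ⟨⟨0, hn⟩⟩⟩

-- For `n = k + 2`, the clique of `KPlus n` is the image of `Fin.castSucc` and the pendant vertex
-- is `Fin.last`.
lemma kPlus_adj_castSucc_castSucc {k : ℕ} (i j : Fin (k + 1)) :
    (KPlus (k + 2)).Adj i.castSucc j.castSucc ↔ i ≠ j := by
  simp only [KPlus, ne_eq, Fin.val_castSucc, Fin.ext_iff]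
  omega

lemma kPlus_adj_castSucc_last {k : ℕ} (i : Fin (k + 1)) :
    (KPlus (k + 2)).Adj i.castSucc (Fin.last _) ↔ i = 0 := by
  simp only [KPlus, Fin.ext_iff]
  simp

lemma kPlus_adj_last_castSucc {k : ℕ} (i : Fin (k + 1)) :
    (KPlus (k + 2)).Adj (Fin.last _) i.castSucc ↔ i = 0 := by
  rw [SimpleGraph.adj_comm, kPlus_adj_castSucc_last]

def cliqueIndicator (k : ℕ) : Fin (k + 2) → ℝ := Fin.lastCases 0 fun _ => 1

def pendantTestVec (k : ℕ) : Fin (k + 2) → ℝ :=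
  Fin.lastCases (k + 1) fun i => if i = 0 then -1 else 0

lemma cliqueIndicator_dotProduct_self (k : ℕ) :
    cliqueIndicator k ⬝ᵥ cliqueIndicator k = k + 1 := by
  simp [cliqueIndicator, dotProduct, Fin.sum_univ_castSucc (n := k + 1)]

lemma pendantTestVec_dotProduct_self (k : ℕ) :
    pendantTestVec k ⬝ᵥ pendantTestVec k = (k + 1) ^ 2 + 1 := by
  simp [pendantTestVec, dotProduct, Fin.sum_univ_castSucc (n := k + 1)]
  ring

lemma cliqueIndicator_dotProduct_signlessLap_kPlus (k : ℕ) :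
    cliqueIndicator k ⬝ᵥ signlessLap (KPlus (k + 2)) *ᵥ cliqueIndicator k
      = 2 * k ^ 2 + 2 * k + 1 := by
  classical
  rw [SimpleGraph.dotProduct_signlessLap_mulVec]
  simp only [Fin.sum_univ_castSucc (n := k + 1)]
  simp [cliqueIndicator, kPlus_adj_castSucc_castSucc, kPlus_adj_castSucc_last,
    kPlus_adj_last_castSucc, sum_ite, sum_add_distrib, filter_not, filter_eq, card_sdiff]
  ring

lemma pendantTestVec_dotProduct_signlessLap_kPlus (k : ℕ) :
    pendantTestVec k ⬝ᵥ signlessLap (KPlus (k + 2)) *ᵥ pendantTestVec k = k * (k + 1) := by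
  classical
  rw [SimpleGraph.dotProduct_signlessLap_mulVec]
  simp only [Fin.sum_univ_castSucc (n := k + 1)]
  simp [pendantTestVec, kPlus_adj_castSucc_castSucc, kPlus_adj_castSucc_last,
    kPlus_adj_last_castSucc, sum_ite, sum_add_distrib, filter_not, filter_eq, card_sdiff]
  ring

lemma two_mul_lt_q1_kPlus (k : ℕ) : 2 * (k : ℝ) < q1 (KPlus (k + 2)) := by
  have h := (KPlus (k + 2)).posSemidef_signlessLap.isHermitian.dotProduct_mulVec_le_lamMax_mul
    (cliqueIndicator k)
  rw [cliqueIndicator_dotProduct_signlessLap_kPlus, cliqueIndicator_dotProduct_self] at h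
  refine lt_of_mul_lt_mul_right (h.trans_lt' ?_) (by positivity : (0 : ℝ) ≤ k + 1)
  linarith

lemma qmin_kPlus_lt_one (k : ℕ) : qmin (KPlus (k + 2)) < 1 := by
  have h := (KPlus (k + 2)).posSemidef_signlessLap.isHermitian.lamMin_mul_le_dotProduct_mulVec
    (pendantTestVec k)
  rw [pendantTestVec_dotProduct_signlessLap_kPlus, pendantTestVec_dotProduct_self] at h
  refine lt_of_mul_lt_mul_right (h.trans_lt ?_) (by positivity : (0 : ℝ) ≤ (k + 1) ^ 2 + 1)
  linarith

theorem stmt8_general (n : ℕ) (hn : 6 ≤ n) (G : SimpleGraph (Fin n))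
    (hmax : ∀ H : SimpleGraph (Fin n), H.Connected → sQ H ≤ sQ G) :
    2 * (n : ℝ) - 5 < q1 G ∧ qmin G < 3 := by
  obtain ⟨k, rfl⟩ : ∃ k, n = k + 2 := ⟨n - 2, by omega⟩
  have hKPlus : 2 * (k : ℝ) - 1 < sQ (KPlus (k + 2)) := by
    have := two_mul_lt_q1_kPlus k
    have := qmin_kPlus_lt_one k
    unfold sQ
    linarith
  have hG := hKPlus.trans_le (hmax _ (kPlus_connected (by omega)))
  have hq1 := G.q1_le_two_mul_sub_two (by omega)
  have hqmin := G.qmin_nonneg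
  unfold sQ at hG
  push_cast at hq1 ⊢
  constructor <;> linarith

theorem stmt8 (n : ℕ) (hn : 6 ≤ n) (G : SimpleGraph (Fin n)) (hconn : G.Connected)
    (hmax : ∀ H : SimpleGraph (Fin n), H.Connected → sQ H ≤ sQ G) :
    2 * (n : ℝ) - 5 < q1 G ∧ qmin G < 3 :=
  stmt8_general n hn G hmax
end
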